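/- arXiv:2102.12177 — 3 statements merged into one kernel-verified Lean document; each statement's English description precedes it below -/
import Mathlib

section
/- For integers s, t ≥ 1, m ≥ 1, and l ≥ 0, one has Σ_{m_1+m_2=m, m_1,m_2≥0} Σ_{|e|=m_2} ζ((s+m_1) ⊛ (((t+1) ⧢ ({2}^l)) ⊕ e)) − Σ_{m_1+m_2=m−1, m_1,m_2≥0} Σ_{|e|=m_2} ζ((s+m_1+1) ⊛ (((t+1) ⧢ ({2}^l)) ⊕ e)) = O_m((s) ⊛ ((t+1) ⧢ ({2}^l))), where e runs over sequences of nonnegative integers of depth l+1 with the indicated entry sum, and ⊕e is applied termwise. -/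
open scoped BigOperators

/-- The multiple zeta value of an index `k = (k₁, …, k_r)`:
`ζ(k₁,…,k_r) = Σ_{1 ≤ m₁ < ⋯ < m_r} 1/(m₁^{k₁} ⋯ m_r^{k_r})`,
written as a `tsum` over strictly increasing tuples of positive integers. -/
noncomputable def mzv (k : List ℕ) : ℝ :=
  ∑' f : {f : Fin k.length → ℕ+ // StrictMono f},
    ∏ i : Fin k.length, (1 : ℝ) / (((f.1 i : ℕ) : ℝ) ^ (k.get i))

/-- Formal ℚ-linear combinations of indices. -/
abbrev IndexSum := List ℕ →₀ ℚ

/-- An index viewed as a formal sum. -/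
noncomputable def ofIdx (k : List ℕ) : IndexSum := Finsupp.single k 1

/-- ζ extended ℚ-linearly to formal sums of indices. -/
noncomputable def mzvL (x : IndexSum) : ℝ := x.sum fun k c => (c : ℝ) * mzv k

/-- The Ohno sum `O_m(k) = Σ_{|e| = m} ζ(k ⊕ e)`. -/
noncomputable def ohno (m : ℕ) (k : List ℕ) : ℝ :=
  ∑ e ∈ Finset.Nat.antidiagonalTuple k.length m,
    mzv (List.ofFn fun i : Fin k.length => k.get i + e i)

/-- The Ohno sum extended ℚ-linearly to formal sums of indices. -/
noncomputable def ohnoL (m : ℕ) (x : IndexSum) : ℝ := x.sum fun k c => (c : ℝ) * ohno m k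

/-- The multiset of shuffles of two lists. -/
def shuffles : List ℕ → List ℕ → Multiset (List ℕ)
  | [], l => {l}
  | a :: k, [] => {a :: k}
  | a :: k, b :: l =>
      ((shuffles k (b :: l)).map (a :: ·)) + ((shuffles (a :: k) l).map (b :: ·))
  termination_by k l => k.length + l.length

/-- The shuffle product of two indices, as a formal sum of indices. -/
noncomputable def shufL (k l : List ℕ) : IndexSum := ((shuffles k l).map ofIdx).sum

/-- The shuffle product, extended ℚ-bilinearly to formal sums of indices. -/
noncomputable def shuf (x y : IndexSum) : IndexSum :=
  x.sum fun k c => y.sum fun l d => (c * d) • shufL k l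

/-- Encoding of an index as a binary word: an entry `a` becomes the block
`false, true, …, true` with `a - 1` trues. -/
def encodeIdx (k : List ℕ) : List Bool := k.flatMap fun a => false :: List.replicate (a - 1) true

/-- Auxiliary decoder. -/
def decodeAux : List Bool → ℕ → List ℕ
  | [], n => [n]
  | false :: w, n => n :: decodeAux w 1
  | true :: w, n => decodeAux w (n + 1)

/-- Decoding of a binary word into an index. -/
def decodeIdx : List Bool → List ℕ
  | [] => []
  | _ :: w => decodeAux w 1

/-- The dual index `k†`: reverse the binary word of `k` and swap the letters. -/
def dualIdx (k : List ℕ) : List ℕ := decodeIdx (((encodeIdx k).reverse).map (fun b => !b))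

/-- Duality extended termwise to formal sums of indices. -/
noncomputable def dualL (x : IndexSum) : IndexSum := Finsupp.mapDomain dualIdx x

/-- `(a) ⊛ (l₁,…,l_r) = Σ_{i=1}^{r} (l₁,…,l_{i-1}, l_i + a, l_{i+1},…,l_r)`. -/
noncomputable def hastIdx (a : ℕ) (l : List ℕ) : IndexSum :=
  ∑ i : Fin l.length, Finsupp.single (l.set i (l.get i + a)) 1

/-- `⊛` extended ℚ-linearly in the second argument. -/
noncomputable def hast (a : ℕ) (x : IndexSum) : IndexSum := x.sum fun l c => c • hastIdx a l

/-- `Σ_{|e| = m} ζ((a) ⊛ (x ⊕ e))`, where for each index occurring in `x` the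
sequence `e` of nonnegative integers runs over the suitable depth (the depth of
that index) with entry sum `m`, and `⊕ e` is applied termwise. -/
noncomputable def zetaHastSum (a m : ℕ) (x : IndexSum) : ℝ :=
  x.sum fun k c => (c : ℝ) *
    ∑ e ∈ Finset.Nat.antidiagonalTuple k.length m,
      mzvL (hastIdx a (List.ofFn fun i : Fin k.length => k.get i + e i))

/-- Appending an entry `a` to each index occurring in a formal sum. -/
noncomputable def appendL (x : IndexSum) (a : ℕ) : IndexSum :=
  Finsupp.mapDomain (fun k => k ++ [a]) x

/-- `F_{m,l}(s; k) = O_m((s) ⧢ k ⧢ ({2}^l)) − O_m((s) ⧢ (k ⧢ ({2}^l))†)`. -/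
noncomputable def F (m l s : ℕ) (k : List ℕ) : ℝ :=
  ohnoL m (shuf (ofIdx [s]) (shufL k (List.replicate l 2)))
    - ohnoL m (shuf (ofIdx [s]) (dualL (shufL k (List.replicate l 2))))

/-- `D_{m,l}(s,t) = F_{m,l}(s;(t+1)) − F_{m,l}(t;(s+1))`. -/
noncomputable def D (m l s t : ℕ) : ℝ := F m l s [t + 1] - F m l t [s + 1]

/-! The left-hand side telescopes: splitting off the term `m₁ = 0` of the first sum, the
remaining terms `(s + m₁ + 1, m₂)` with `m₁ + m₂ = m - 1` cancel the second sum, leaving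
`Σ_{|e| = m} ζ((s) ⊛ (k ⊕ e))` summed over the indices `k` of `(t+1) ⧢ ({2}^l)`. This equals
`O_m((s) ⊛ k)`, because raising the `i`-th entry by `s` commutes with adding `e`. -/

open Finset

lemma sum_antidiagonal_sub_sum_antidiagonal_pred {M : Type*} [AddCommGroup M]
    (f : ℕ → ℕ → M) (s : ℕ) {m : ℕ} (hm : 1 ≤ m) :
    ∑ p ∈ antidiagonal m, f (s + p.1) p.2 - ∑ p ∈ antidiagonal (m - 1), f (s + p.1 + 1) p.2
      = f s m := by
  obtain ⟨n, rfl⟩ : ∃ n, m = n + 1 := ⟨m - 1, by omega⟩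
  rw [Nat.sum_antidiagonal_succ]
  simp only [Nat.add_sub_cancel, add_zero, ← add_assoc, add_sub_cancel_right]

lemma mzvL_eq_linearCombination : mzvL = Finsupp.linearCombination ℚ mzv := by
  ext x
  simp [mzvL, Finsupp.linearCombination_apply, Rat.smul_def]

lemma ohnoL_eq_linearCombination (m : ℕ) : ohnoL m = Finsupp.linearCombination ℚ (ohno m) := by
  ext x
  simp [ohnoL, Finsupp.linearCombination_apply, Rat.smul_def]

lemma ohnoL_hast (m a : ℕ) (x : IndexSum) :
    ohnoL m (hast a x) = x.sum fun k c => (c : ℝ) * ohnoL m (hastIdx a k) := by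
  simp [hast, ohnoL_eq_linearCombination, map_finsuppSum, Rat.smul_def]

lemma mzvL_hastIdx (a : ℕ) (k : List ℕ) :
    mzvL (hastIdx a k) = ∑ i : Fin k.length, mzv (k.set i (k.get i + a)) := by
  simp [hastIdx, mzvL_eq_linearCombination]

lemma ohnoL_hastIdx (m a : ℕ) (k : List ℕ) :
    ohnoL m (hastIdx a k) = ∑ i : Fin k.length, ohno m (k.set i (k.get i + a)) := by
  simp [hastIdx, ohnoL_eq_linearCombination]

lemma ohno_eq_of_length_eq {k : List ℕ} {n : ℕ} (h : k.length = n) (m : ℕ) :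
    ohno m k = ∑ e ∈ Nat.antidiagonalTuple n m,
      mzv (List.ofFn fun i : Fin n => k.get (Fin.cast h.symm i) + e i) := by
  subst h
  rfl

lemma set_ofFn_add_eq_ofFn_set (k : List ℕ) (e : Fin k.length → ℕ) (a : ℕ) (i : Fin k.length) :
    (List.ofFn fun j => k.get j + e j).set i (k.get i + e i + a)
      = List.ofFn fun j : Fin k.length =>
          (k.set i (k.get i + a)).get (Fin.cast (by simp) j) + e j := by
  refine List.ext_getElem (by simp) fun p _ hp => ?_
  simp only [List.getElem_set, List.getElem_ofFn, List.get_eq_getElem, Fin.val_cast]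
  split_ifs with h
  · subst h; ring
  · rfl

lemma zetaHastSum_eq_ohnoL_hast (a m : ℕ) (x : IndexSum) :
    zetaHastSum a m x = ohnoL m (hast a x) := by
  rw [ohnoL_hast, zetaHastSum]
  refine Finsupp.sum_congr fun k _ => congrArg _ ?_
  have hlen (e : Fin k.length → ℕ) : (List.ofFn fun i => k.get i + e i).length = k.length :=
    List.length_ofFn
  simp_rw [ohnoL_hastIdx, ohno_eq_of_length_eq (List.length_set ..) m, mzvL_hastIdx,
    ← Fin.sum_congr' _ (hlen _).symm]
  rw [sum_comm]
  refine sum_congr rfl fun i _ => sum_congr rfl fun e _ => ?_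
  simpa using congrArg mzv (set_ofFn_add_eq_ofFn_set k e a i)

theorem statement5_general (s t m l : ℕ) (hm : 1 ≤ m) :
    (∑ p ∈ Finset.HasAntidiagonal.antidiagonal m,
        zetaHastSum (s + p.1) p.2 (shufL [t + 1] (List.replicate l 2)))
      - ∑ p ∈ Finset.HasAntidiagonal.antidiagonal (m - 1),
          zetaHastSum (s + p.1 + 1) p.2 (shufL [t + 1] (List.replicate l 2))
    = ohnoL m (hast s (shufL [t + 1] (List.replicate l 2))) := by
  rw [sum_antidiagonal_sub_sum_antidiagonal_pred
    (fun a n => zetaHastSum a n (shufL [t + 1] (List.replicate l 2))) s hm]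
  exact zetaHastSum_eq_ohnoL_hast s m _

/-- For integers `s, t ≥ 1`, `m ≥ 1`, and `l ≥ 0`,
`Σ_{m₁+m₂=m} Σ_{|e|=m₂} ζ((s+m₁) ⊛ (((t+1) ⧢ ({2}^l)) ⊕ e))
  − Σ_{m₁+m₂=m−1} Σ_{|e|=m₂} ζ((s+m₁+1) ⊛ (((t+1) ⧢ ({2}^l)) ⊕ e))
  = O_m((s) ⊛ ((t+1) ⧢ ({2}^l)))`. -/
theorem statement5 (s t m l : ℕ) (hs : 1 ≤ s) (ht : 1 ≤ t) (hm : 1 ≤ m) :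
    (∑ p ∈ Finset.HasAntidiagonal.antidiagonal m,
        zetaHastSum (s + p.1) p.2 (shufL [t + 1] (List.replicate l 2)))
      - ∑ p ∈ Finset.HasAntidiagonal.antidiagonal (m - 1),
          zetaHastSum (s + p.1 + 1) p.2 (shufL [t + 1] (List.replicate l 2))
    = ohnoL m (hast s (shufL [t + 1] (List.replicate l 2))) :=
  statement5_general s t m l hm
end

section
/- For integers l ≥ 1, s ≥ 2, m ≥ 0, and all integers p, q with 1 ≤ p, q ≤ l+1, one has G_{p,q} = H_{p,q}. -/
open scoped BigOperators

/-!
Both sides are sums over the same multiple zeta values `ζ(f + c)`, where `c` is the index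
`(2, …, 2, 3, 2, …, 2)` with the `3` in position `q` and `f` runs over compositions of `m + s`
into `l + 1` nonnegative parts. On the left, the index of `O_{m-a}` is `c` with `s + a` added in
position `p`, so its terms are `ζ(c + e + (s + a) δ_p)` with `|e| = m - a`; putting
`f = e + (s + a) δ_p` identifies the pairs `(a, e)` with the pairs `(f, a)` such that
`s + a ≤ f_p`. For fixed `f` there are `max(f_p - s + 1, 0)` such `a`, which is the weight on the
right.
-/

open Finset

lemma ohno_ofFn {n : ℕ} (m : ℕ) (g : Fin n → ℕ) :
    ohno m (List.ofFn g) =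
      ∑ e ∈ Nat.antidiagonalTuple n m, mzv (List.ofFn fun i => g i + e i) := by
  have hcast : ∀ (N : ℕ) (h : N = n), ∑ x ∈ Nat.antidiagonalTuple N m,
      mzv (List.ofFn fun i => g i + x (Fin.cast h.symm i)) =
      ∑ e ∈ Nat.antidiagonalTuple n m, mzv (List.ofFn fun i => g i + e i) := by
    rintro N rfl; rfl
  simpa [ohno] using hcast _ List.length_ofFn

section Reindexing

variable {M : Type*} [AddCommMonoid M] {n : ℕ}

lemma sum_antidiagonalTuple_add_single (N k : ℕ) (j : Fin n) (F : (Fin n → ℕ) → M) :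
    ∑ e ∈ Nat.antidiagonalTuple n N, F (e + Pi.single j k) =
      ∑ f ∈ Nat.antidiagonalTuple n (N + k) with k ≤ f j, F f := by
  have single_le {f : Fin n → ℕ} (hf : k ≤ f j) : Pi.single j k ≤ f := fun i => by
    rcases eq_or_ne i j with rfl | hi <;> simp [*]
  refine sum_nbij' (· + Pi.single j k) (· - Pi.single j k) ?_ ?_ ?_ ?_ fun _ _ => rfl
  · intro e he
    simp only [mem_filter, Nat.mem_antidiagonalTuple] at he ⊢
    simp [sum_add_distrib, he]
  · intro f hf
    simp only [mem_filter, Nat.mem_antidiagonalTuple, Pi.sub_apply] at hf ⊢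
    rw [sum_tsub_distrib _ fun i _ => single_le hf.2 i, hf.1]
    simp
  · intro e _
    exact add_tsub_cancel_right e _
  · intro f hf
    exact tsub_add_cancel_of_le (single_le (mem_filter.1 hf).2)

lemma sum_range_sum_antidiagonalTuple_add_single (m s : ℕ) (j : Fin n)
    (F : (Fin n → ℕ) → M) :
    ∑ a ∈ range (m + 1), ∑ e ∈ Nat.antidiagonalTuple n (m - a),
        F (e + Pi.single j (s + a)) =
      ∑ f ∈ Nat.antidiagonalTuple n (m + s), (f j + 1 - s) • F f := by
  calc _ = ∑ a ∈ range (m + 1),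
          ∑ f ∈ Nat.antidiagonalTuple n (m + s) with s + a ≤ f j, F f :=
        sum_congr rfl fun a ha => by
          rw [sum_antidiagonalTuple_add_single, show m - a + (s + a) = m + s by
            have := mem_range.1 ha; omega]
    _ = ∑ f ∈ Nat.antidiagonalTuple n (m + s),
          ∑ a ∈ range (m + 1) with s + a ≤ f j, F f := by
        simp only [sum_filter]
        exact sum_comm
    _ = _ := sum_congr rfl fun f hf => by
        have hfj : f j ≤ m + s := by
          rw [← Nat.mem_antidiagonalTuple.1 hf]
          exact single_le_sum (fun i _ => Nat.zero_le (f i)) (mem_univ j)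
        have hcount : {a ∈ range (m + 1) | s + a ≤ f j} = range (f j + 1 - s) := by
          ext a
          simp only [mem_filter, mem_range]
          omega
        rw [sum_const, hcount, card_range]

end Reindexing

def indexG (l s p q a : ℕ) : List ℕ :=
  if p < q then
    List.replicate (p - 1) 2 ++ [s + a + 2] ++ List.replicate (q - p - 1) 2 ++ [3] ++
      List.replicate (l + 1 - q) 2
  else if p = q then
    List.replicate (p - 1) 2 ++ [s + a + 3] ++ List.replicate (l + 1 - p) 2
  else
    List.replicate (q - 1) 2 ++ [3] ++ List.replicate (p - q - 1) 2 ++ [s + a + 2] ++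
      List.replicate (l + 1 - p) 2

lemma indexG_eq_ofFn {l s p q : ℕ} (a : ℕ) (hp : 1 ≤ p) (hp' : p ≤ l + 1) (hq : 1 ≤ q)
    (hq' : q ≤ l + 1) :
    indexG l s p q a = List.ofFn fun i : Fin (l + 1) =>
      (if (i : ℕ) = p - 1 then s + a else 0) + if (i : ℕ) = q - 1 then 3 else 2 := by
  apply List.ext_getElem
  · unfold indexG
    split_ifs <;> simp <;> omega
  · intro i _ _
    simp only [indexG, List.getElem_ofFn]
    split_ifs <;> simp only [List.getElem_append, List.getElem_replicate, List.length_append,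
      List.length_replicate, List.length_cons, List.length_nil, List.getElem_singleton] <;>
      split_ifs <;> omega

/-- For integers `l ≥ 1`, `s ≥ 2`, `m ≥ 0`, and `1 ≤ p, q ≤ l+1`, one has
`G_{p,q} = H_{p,q}`, where
`G_{p,q} = Σ_{a=0}^{m} O_{m−a}({2}^{p−1}, s+a+2, {2}^{q−p−1}, 3, {2}^{l−q+1})` if `p < q`,
`G_{p,q} = Σ_{a=0}^{m} O_{m−a}({2}^{p−1}, s+a+3, {2}^{l−p+1})` if `p = q`,
`G_{p,q} = Σ_{a=0}^{m} O_{m−a}({2}^{q−1}, 3, {2}^{p−q−1}, s+a+2, {2}^{l−p+1})` if `p > q`, and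
`H_{p,q} = Σ_{m₁+⋯+m_{l+1}=m+s} max{m_p−s+1, 0} ·
  ζ(m₁+2, …, m_{q−1}+2, m_q+3, m_{q+1}+2, …, m_{l+1}+2)`. -/
theorem statement10 (l s m p q : ℕ)
    (hp : 1 ≤ p) (hp' : p ≤ l + 1) (hq : 1 ≤ q) (hq' : q ≤ l + 1) :
    (if p < q then
        ∑ a ∈ Finset.range (m + 1),
          ohno (m - a) (List.replicate (p - 1) 2 ++ [s + a + 2] ++
            List.replicate (q - p - 1) 2 ++ [3] ++ List.replicate (l + 1 - q) 2)
      else if p = q then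
        ∑ a ∈ Finset.range (m + 1),
          ohno (m - a) (List.replicate (p - 1) 2 ++ [s + a + 3] ++
            List.replicate (l + 1 - p) 2)
      else
        ∑ a ∈ Finset.range (m + 1),
          ohno (m - a) (List.replicate (q - 1) 2 ++ [3] ++
            List.replicate (p - q - 1) 2 ++ [s + a + 2] ++ List.replicate (l + 1 - p) 2))
    = ∑ f ∈ Finset.Nat.antidiagonalTuple (l + 1) (m + s),
        ((f ⟨p - 1, by omega⟩ + 1 - s : ℕ) : ℝ) *
          mzv (List.ofFn fun i : Fin (l + 1) =>
            if (i : ℕ) = q - 1 then f i + 3 else f i + 2) := by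
  set j : Fin (l + 1) := ⟨p - 1, by omega⟩
  let c : Fin (l + 1) → ℕ := fun i => if (i : ℕ) = q - 1 then 3 else 2
  calc _ = ∑ a ∈ range (m + 1), ohno (m - a) (indexG l s p q a) := by
        unfold indexG
        split_ifs <;> rfl
    _ = ∑ a ∈ range (m + 1), ∑ e ∈ Nat.antidiagonalTuple (l + 1) (m - a),
          mzv (List.ofFn fun i => (e + Pi.single j (s + a) : Fin (l + 1) → ℕ) i + c i) := by
        refine sum_congr rfl fun a _ => ?_
        rw [indexG_eq_ofFn a hp hp' hq hq', ohno_ofFn]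
        refine sum_congr rfl fun e _ => congrArg mzv (congrArg List.ofFn (funext fun i => ?_))
        simp only [Pi.add_apply, Pi.single_apply, j, c, Fin.ext_iff]
        omega
    _ = ∑ f ∈ Nat.antidiagonalTuple (l + 1) (m + s),
          (f j + 1 - s) • mzv (List.ofFn fun i => f i + c i) :=
        sum_range_sum_antidiagonalTuple_add_single m s j fun f =>
          mzv (List.ofFn fun i => f i + c i)
    _ = _ := sum_congr rfl fun f _ => by simp only [nsmul_eq_mul, c, add_ite]
end

section
/- For integers s, t ≥ 3 and l, m ≥ 0, one has O_m((s−1) ⊛ ((t+1) ⧢ ({2}^l))) = O_m((t−1) ⊛ ((s+1) ⧢ ({2}^l))). -/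
open scoped BigOperators

/-!
Both sides agree already as formal sums of indices. Since `(c + b) ⧢ ({c}^l)` places `c + b` at each
of the `l + 1` positions of `{c}^{l+1}`, the index `(a) ⊛ ((c + b) ⧢ ({c}^l))` is the sum over pairs
`(i, j)` of `{c}^{l+1}` with `b` added at position `i` and then `a` at position `j`. These two
additions commute, so swapping `(i, j)` exchanges the roles of `a` and `b`. Take `c = 2`, `a = s - 1`, `b = t - 1`.
-/

open Finset

lemma hast_eq_linearCombination (a : ℕ) :
    hast a = Finsupp.linearCombination ℚ (hastIdx a) := by
  funext x
  rw [Finsupp.linearCombination_apply, hast]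

lemma hast_ofIdx (a : ℕ) (k : List ℕ) : hast a (ofIdx k) = hastIdx a k := by
  rw [hast_eq_linearCombination, ofIdx, Finsupp.linearCombination_single, one_smul]

lemma hast_sum (a : ℕ) {ι : Type*} (S : Finset ι) (x : ι → IndexSum) :
    hast a (∑ i ∈ S, x i) = ∑ i ∈ S, hast a (x i) := by
  rw [hast_eq_linearCombination, map_sum]

lemma hastIdx_eq_sum_modify (a : ℕ) (k : List ℕ) :
    hastIdx a k = ∑ j ∈ range k.length, ofIdx (k.modify j (· + a)) := by
  rw [hastIdx, ← Fin.sum_univ_eq_sum_range]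
  refine sum_congr rfl fun j _ => ?_
  rw [List.modify_eq_set_get _ j.isLt]
  rfl

lemma shuffles_singleton (a : ℕ) (w : List ℕ) :
    shuffles [a] w = (Multiset.range (w.length + 1)).map fun i => w.insertIdx i a := by
  induction w with
  | nil => simp [shuffles]
  | cons b w ih =>
    rw [shuffles, shuffles, ih, List.length_cons, Multiset.range, Multiset.range,
      List.range_succ_eq_map (n := w.length + 1)]
    simp only [Multiset.map_coe, List.map_cons, List.map_map, Function.comp_def,
      List.insertIdx_zero, Nat.succ_eq_add_one, List.insertIdx_succ_cons]
    rfl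

lemma shufL_singleton (a : ℕ) (w : List ℕ) :
    shufL [a] w = ∑ i ∈ range (w.length + 1), ofIdx (w.insertIdx i a) := by
  rw [shufL, shuffles_singleton, Multiset.map_map]
  rfl

lemma List.insertIdx_replicate_add {α : Type*} [Add α] (b c : α) {l i : ℕ} (hi : i ≤ l) :
    (replicate l c).insertIdx i (c + b) = (replicate (l + 1) c).modify i (· + b) := by
  induction i generalizing l with
  | zero => simp [replicate_succ]
  | succ i ih =>
    cases l with
    | zero => omega
    | succ l => simp [replicate_succ, insertIdx_succ_cons, ih (by omega : i ≤ l)]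

lemma List.modify_add_comm {α : Type*} [AddCommSemigroup α] (l : List α) (i j : ℕ) (a b : α) :
    (l.modify i (· + a)).modify j (· + b) = (l.modify j (· + b)).modify i (· + a) := by
  rcases eq_or_ne i j with rfl | hij
  · simp only [modify_modify_eq, Function.comp_def, add_right_comm]
  · exact modify_modify_ne _ _ l hij

lemma shufL_singleton_replicate (b c l : ℕ) :
    shufL [c + b] (List.replicate l c)
      = ∑ i ∈ range (l + 1), ofIdx ((List.replicate (l + 1) c).modify i (· + b)) := by
  rw [shufL_singleton, List.length_replicate]
  refine sum_congr rfl fun i hi => ?_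
  rw [List.insertIdx_replicate_add b c (Nat.lt_succ_iff.mp (mem_range.mp hi))]

theorem hast_shufL_replicate_comm (a b c l : ℕ) :
    hast a (shufL [c + b] (List.replicate l c)) = hast b (shufL [c + a] (List.replicate l c)) := by
  simp only [shufL_singleton_replicate, hast_sum, hast_ofIdx, hastIdx_eq_sum_modify,
    List.length_modify, List.length_replicate]
  rw [sum_comm]
  exact sum_congr rfl fun i _ => sum_congr rfl fun j _ => by rw [List.modify_add_comm]

/-- For integers `s, t ≥ 3` and `l, m ≥ 0`,
`O_m((s−1) ⊛ ((t+1) ⧢ ({2}^l))) = O_m((t−1) ⊛ ((s+1) ⧢ ({2}^l)))`. -/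
theorem statement14 (s t l m : ℕ) (hs : 3 ≤ s) (ht : 3 ≤ t) :
    ohnoL m (hast (s - 1) (shufL [t + 1] (List.replicate l 2)))
      = ohnoL m (hast (t - 1) (shufL [s + 1] (List.replicate l 2))) := by
  have hs' : s + 1 = 2 + (s - 1) := by omega
  have ht' : t + 1 = 2 + (t - 1) := by omega
  rw [hs', ht', hast_shufL_replicate_comm]
end
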